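/- arXiv:1111.1510 — 2 statements merged into one kernel-verified Lean document; each statement's English description precedes it below -/
import Mathlib

section
/- Let P : ℝ⁶ → Matrix (Fin 6) (Fin 6) ℝ be a smooth Poisson matrix of block form P = [[M, 0, 0],[0,0,1],[0,-1,0]] where M is the upper-left 4×4 block (last two rows/columns vanish except the entries P₅₆ = 1, P₆₅ = -1). Suppose P satisfies the Jacobi identity: for all i,j,k, Σₗ (Pₗᵢ ∂ₗPⱼₖ + Pₗⱼ ∂ₗPₖᵢ + Pₗₖ ∂ₗPᵢⱼ) = 0. Then the submatrix M is independent of the variables r₅ and r₆, i.e. ∂M/∂r₅ = 0 and ∂M/∂r₆ = 0. -/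
noncomputable section

theorem stmt0
    (P : (Fin 6 → ℝ) → Matrix (Fin 6) (Fin 6) ℝ)
    (hsmooth : ∀ i j : Fin 6, ContDiff ℝ (⊤ : ℕ∞) (fun r => P r i j))
    (hblock : ∀ (r : Fin 6 → ℝ) (i j : Fin 6), 4 ≤ i.val ∨ 4 ≤ j.val →
      P r i j = if i = 4 ∧ j = 5 then 1 else if i = 5 ∧ j = 4 then -1 else 0)
    (hjacobi : ∀ (r : Fin 6 → ℝ) (i j k : Fin 6),
      ∑ l : Fin 6,
        (P r l i * fderiv ℝ (fun s => P s j k) r (Pi.single l 1)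
          + P r l j * fderiv ℝ (fun s => P s k i) r (Pi.single l 1)
          + P r l k * fderiv ℝ (fun s => P s i j) r (Pi.single l 1)) = 0) :
    ∀ (r : Fin 6 → ℝ) (i j : Fin 6), i.val < 4 → j.val < 4 →
      fderiv ℝ (fun s => P s i j) r (Pi.single (4 : Fin 6) 1) = 0 ∧
      fderiv ℝ (fun s => P s i j) r (Pi.single (5 : Fin 6) 1) = 0 := by
  intro r i j hi hj
  -- entries mixing low/high indices vanish identically
  have key : ∀ (a b : Fin 6), a.val < 4 → 4 ≤ b.val → (fun s => P s a b) = fun _ => (0:ℝ) := by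
    intro a b ha hb
    funext s
    rw [hblock s a b (Or.inr hb)]
    have h4 : a ≠ 4 := by intro h; exact absurd (h ▸ ha) (by decide)
    have h5 : a ≠ 5 := by intro h; exact absurd (h ▸ ha) (by decide)
    simp [h4, h5]
  have key' : ∀ (a b : Fin 6), a.val < 4 → 4 ≤ b.val → (fun s => P s b a) = fun _ => (0:ℝ) := by
    intro a b ha hb
    funext s
    rw [hblock s b a (Or.inl hb)]
    have h4 : a ≠ 4 := by intro h; exact absurd (h ▸ ha) (by decide)
    have h5 : a ≠ 5 := by intro h; exact absurd (h ▸ ha) (by decide)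
    simp [h4, h5]
  have d1 : fderiv ℝ (fun s => P s j (5 : Fin 6)) r = 0 := by
    rw [key j 5 hj (by decide)]; exact fderiv_const_apply 0
  have d2 : fderiv ℝ (fun s => P s (5 : Fin 6) i) r = 0 := by
    rw [key' i 5 hi (by decide)]; exact fderiv_const_apply 0
  have d3 : fderiv ℝ (fun s => P s j (4 : Fin 6)) r = 0 := by
    rw [key j 4 hj (by decide)]; exact fderiv_const_apply 0
  have d4 : fderiv ℝ (fun s => P s (4 : Fin 6) i) r = 0 := by
    rw [key' i 4 hi (by decide)]; exact fderiv_const_apply 0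
  have hP5 : ∀ l : Fin 6, P r l 5 = if l = 4 then 1 else 0 := by
    intro l
    rw [hblock r l 5 (Or.inr (by decide))]
    by_cases h : l = (4 : Fin 6) <;> simp [h]
  have hP4 : ∀ l : Fin 6, P r l 4 = if l = 5 then -1 else 0 := by
    intro l
    rw [hblock r l 4 (Or.inr (by decide))]
    by_cases h : l = (5 : Fin 6) <;> simp [h]
  constructor
  · have hJ := hjacobi r i j 5
    simp only [d1, d2, ContinuousLinearMap.zero_apply, mul_zero, zero_add, add_zero] at hJ
    rw [Fin.sum_univ_six] at hJ
    simp only [hP5] at hJ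
    norm_num [Fin.ext_iff, show ((3:Fin 6):ℕ)=3 from rfl, show ((4:Fin 6):ℕ)=4 from rfl, show ((5:Fin 6):ℕ)=5 from rfl] at hJ
    linarith [hJ]
  · have hJ := hjacobi r i j 4
    simp only [d3, d4, ContinuousLinearMap.zero_apply, mul_zero, zero_add, add_zero] at hJ
    rw [Fin.sum_univ_six] at hJ
    simp only [hP4] at hJ
    norm_num [Fin.ext_iff, show ((3:Fin 6):ℕ)=3 from rfl, show ((4:Fin 6):ℕ)=4 from rfl, show ((5:Fin 6):ℕ)=5 from rfl] at hJ
    linarith [hJ]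
end
end

section
/- Under the same hypotheses (block-form Poisson matrix P satisfying the Jacobi identity, Hamiltonian H with ∂H/∂r₆ = 0), the time evolution of the first four components (R₁,R₂,R₃,R₄) of a solution of dR/dt = P(R)∇H(R) is governed by a vector field that does not depend on the sixth component r₆; i.e. the right-hand side of the equations for dRᵢ/dt, i = 1,…,4, is independent of r₆. -/
noncomputable section

theorem stmt2
    (P : (Fin 6 → ℝ) → Matrix (Fin 6) (Fin 6) ℝ)
    (H : (Fin 6 → ℝ) → ℝ)
    (hP : ∀ i j : Fin 6, ContDiff ℝ (⊤ : ℕ∞) (fun r => P r i j))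
    (hH : ContDiff ℝ (⊤ : ℕ∞) H)
    (hblock : ∀ (r : Fin 6 → ℝ) (i j : Fin 6), 4 ≤ i.val ∨ 4 ≤ j.val →
      P r i j = if i = 4 ∧ j = 5 then 1 else if i = 5 ∧ j = 4 then -1 else 0)
    (hjacobi : ∀ (r : Fin 6 → ℝ) (i j k : Fin 6),
      ∑ l : Fin 6,
        (P r l i * fderiv ℝ (fun s => P s j k) r (Pi.single l 1)
          + P r l j * fderiv ℝ (fun s => P s k i) r (Pi.single l 1)
          + P r l k * fderiv ℝ (fun s => P s i j) r (Pi.single l 1)) = 0)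
    (hH6 : ∀ r : Fin 6 → ℝ, fderiv ℝ H r (Pi.single (5 : Fin 6) 1) = 0) :
    ∀ (r : Fin 6 → ℝ) (i : Fin 6), i.val < 4 →
      fderiv ℝ (fun s => ∑ j : Fin 6, P s i j * fderiv ℝ H s (Pi.single j 1)) r
        (Pi.single (5 : Fin 6) 1) = 0 := by
  intro r i hi
  -- H is differentiable, and its derivative is smooth
  have hHd : Differentiable ℝ H := hH.differentiable (by simp)
  have hdH : ContDiff ℝ (↑(⊤:ℕ∞)) (fderiv ℝ H) := (contDiff_infty_iff_fderiv.mp (hH.of_le (by simp))).2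
  have hdHv : ∀ v : Fin 6 → ℝ, Differentiable ℝ (fun s => fderiv ℝ H s v) := by
    intro v
    exact (hdH.clm_apply contDiff_const).differentiable (by simp)
  -- symmetry of second derivative
  have hsym : ∀ (v w : Fin 6 → ℝ),
      fderiv ℝ (fun s => fderiv ℝ H s v) r w = fderiv ℝ (fun s => fderiv ℝ H s w) r v := by
    intro v w
    have hflip : ∀ u u' : Fin 6 → ℝ,
        fderiv ℝ (fun s => fderiv ℝ H s u) r u' = fderiv ℝ (fderiv ℝ H) r u' u := by
      intro u u'
      have := fderiv_clm_apply (c := fderiv ℝ H) (u := fun _ => u)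
        ((hdH.differentiable (by simp)) r) (differentiableAt_const u)
      rw [show (fun s => fderiv ℝ H s u) = (fun y => (fderiv ℝ H y) ((fun _ : Fin 6 → ℝ => u) y)) from rfl, this]
      simp
    rw [hflip v w, hflip w v]
    exact second_derivative_symmetric (fun y => (hHd y).hasFDerivAt)
      ((hdH.differentiable (by simp) r).hasFDerivAt) w v
  -- the derivative of ∂H/∂r₆ vanishes identically
  have hsym5 : ∀ v : Fin 6 → ℝ,
      fderiv ℝ (fun s => fderiv ℝ H s v) r (Pi.single (5 : Fin 6) 1) = 0 := by
    intro v
    rw [hsym]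
    have : (fun s => fderiv ℝ H s (Pi.single (5 : Fin 6) 1)) = fun _ => (0 : ℝ) :=
      funext fun s => hH6 s
    rw [this, fderiv_fun_const]
    simp
  -- ∂P_ij/∂r₆ = 0 for i < 4
  have hPzero : ∀ j : Fin 6,
      fderiv ℝ (fun s => P s i j) r (Pi.single (5 : Fin 6) 1) = 0 := by
    intro j
    have hi4 : i ≠ 4 := by intro h; subst h; exact absurd hi (by decide)
    have hi5 : i ≠ 5 := by intro h; subst h; exact absurd hi (by decide)
    by_cases hj : 4 ≤ j.val
    · -- P s i j = 0 for all s
      have : (fun s => P s i j) = fun _ => (0 : ℝ) := by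
        funext s
        rw [hblock s i j (Or.inr hj)]
        simp [hi4, hi5]
      rw [this, fderiv_fun_const]
      simp
    · -- use Jacobi with k = 4
      push_neg at hj
      have hj4 : j ≠ 4 := by intro h; subst h; exact absurd hj (by decide)
      have hj5 : j ≠ 5 := by intro h; subst h; exact absurd hj (by decide)
      have hJ := hjacobi r i j 4
      have hc1 : (fun s => P s j (4 : Fin 6)) = fun _ => (0 : ℝ) := by
        funext s
        rw [hblock s j 4 (Or.inr (by decide))]
        simp [hj4, hj5, show (4 : Fin 6) ≠ 5 by decide]
      have hc2 : (fun s => P s (4 : Fin 6) i) = fun _ => (0 : ℝ) := by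
        funext s
        rw [hblock s 4 i (Or.inl (by decide))]
        simp [hi4, hi5, show ¬(4 : Fin 6) = 5 by decide]
      rw [hc1, hc2] at hJ
      have hP4 : ∀ l : Fin 6, P r l (4 : Fin 6) = if l = 5 then -1 else 0 := by
        intro l
        rw [hblock r l 4 (Or.inr (by decide))]
        by_cases h : l = 5 <;> simp [h, show (4 : Fin 6) ≠ 5 by decide]
      simp only [fderiv_fun_const, Pi.zero_apply, ContinuousLinearMap.zero_apply, mul_zero,
        zero_add, add_zero, Fin.sum_univ_six, hP4] at hJ
      norm_num at hJ
      simp at hJ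
      linarith [hJ]
  -- differentiability of each summand
  have hdiff : ∀ j : Fin 6, DifferentiableAt ℝ
      (fun s => P s i j * fderiv ℝ H s (Pi.single j 1)) r := by
    intro j
    exact (((hP i j).differentiable (by simp)) r).mul (hdHv (Pi.single j 1) r)
  rw [fderiv_fun_sum (fun j _ => hdiff j)]
  rw [ContinuousLinearMap.sum_apply]
  apply Finset.sum_eq_zero
  intro j _
  rw [fderiv_fun_mul (((hP i j).differentiable (by simp)) r) (hdHv (Pi.single j 1) r)]
  simp [hPzero j, hsym5 (Pi.single j 1)]
end
end
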